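/- Let a>0 and let γ₀,γ₁ ≥ 0 with γ₁ ≤ 2/a and γ₀ − γ₁ ≤ 2. Let h be the unique smooth function on ℂ∖{0} with Δh = 4(e^{ah} − 1), h → 0 at ∞ and h(z)/log|z| → γ₀+γ₁ at 0. Then any smooth solution (u,v) on ℂ∖{0} of the system Δu = 4(e^{au} − e^{v−u}), Δv = 4(e^{v−u} − e^{−av}) with asymptotic data (γ₀,γ₁) satisfies h(z) ≤ u(z) + v(z) ≤ 0 for all z ∈ ℂ∖{0}. -/

import Mathlib

open Filter

/-- The Euclidean Laplacian of `f : ℂ → ℝ`, viewing `ℂ ≅ ℝ²` with orthonormal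
directions `1` and `I`. -/
noncomputable def lap (f : ℂ → ℝ) (z : ℂ) : ℝ :=
  iteratedFDeriv ℝ 2 f z ![1, 1] + iteratedFDeriv ℝ 2 f z ![Complex.I, Complex.I]

/-- `f` is smooth on `ℂ ∖ {0}`. -/
def SmoothOffZero (f : ℂ → ℝ) : Prop := ContDiffOn ℝ (⊤ : ℕ∞) f {(0 : ℂ)}ᶜ

/-- `f z → 0` as `|z| → ∞`. -/
def TendstoZeroAtInfty (f : ℂ → ℝ) : Prop :=
  Tendsto f (comap (fun z : ℂ => ‖z‖) atTop) (nhds 0)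

/-- `f z / log |z| → γ` as `z → 0`. -/
def LogAsymAtZero (γ : ℝ) (f : ℂ → ℝ) : Prop :=
  Tendsto (fun z : ℂ => f z / Real.log ‖z‖) (nhdsWithin 0 {(0 : ℂ)}ᶜ) (nhds γ)

/-- `(u, v)` is a smooth solution on `ℂ ∖ {0}` of the two-function tt*-Toda system
`Δu = 4(e^{au} − e^{v−u})`, `Δv = 4(e^{v−u} − e^{−bv})`. -/
def IsTodaSol (a b : ℝ) (u v : ℂ → ℝ) : Prop :=
  SmoothOffZero u ∧ SmoothOffZero v ∧
  ∀ z : ℂ, z ≠ 0 →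
    lap u z = 4 * (Real.exp (a * u z) - Real.exp (v z - u z)) ∧
    lap v z = 4 * (Real.exp (v z - u z) - Real.exp (-(b * v z)))

/-- `(u, v)` has asymptotic data `(γ, δ)`: `u, v → 0` at `∞` and
`u(z)/log|z| → γ`, `v(z)/log|z| → δ` at `0`. -/
def HasAsymData (γ δ : ℝ) (u v : ℂ → ℝ) : Prop :=
  TendstoZeroAtInfty u ∧ TendstoZeroAtInfty v ∧ LogAsymAtZero γ u ∧ LogAsymAtZero δ v

/-- `h` is a smooth solution on `ℂ ∖ {0}` of the scalar comparison equation
`Δh = 4(e^{ah} − 1)` with `h → 0` at `∞` and `h(z)/log|z| → c` at `0`. -/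
def IsLiouvilleSol (a c : ℝ) (h : ℂ → ℝ) : Prop :=
  SmoothOffZero h ∧
  (∀ z : ℂ, z ≠ 0 → lap h z = 4 * (Real.exp (a * h z) - 1)) ∧
  TendstoZeroAtInfty h ∧ LogAsymAtZero c h

/-!
Each of `u + v`, `u`, `v` and `h - (u + v)` tends to `0` at infinity, is `o(log (1/|z|))` from
above at the origin (it behaves like `γ log |z|` with `γ ≥ 0`), and, given the signs already
obtained for the previous ones in this order, has positive Laplacian wherever it is positive.
Such a function is nonpositive: on an annulus `r ≤ |z| ≤ R` the harmonic barrier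
`ε log (R/|z|) + δ` dominates it on both boundary circles, hence inside, since the difference has
no positive interior maximum; then let `ε, δ → 0`.
-/

open Topology Laplacian InnerProductSpace

theorem IsLocalMax.deriv_deriv_nonpos {g : ℝ → ℝ} {x : ℝ} (h : IsLocalMax g x)
    (hc : ContinuousAt g x) : deriv (deriv g) x ≤ 0 := by
  by_contra! hpos
  have hmin : IsLocalMin g x := isLocalMin_of_deriv_deriv_pos hpos h.deriv_eq_zero hc
  have hconst : g =ᶠ[𝓝 x] fun _ => g x := by
    filter_upwards [h, hmin] with y h₁ h₂ using le_antisymm h₁ h₂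
  have hderiv : deriv g =ᶠ[𝓝 x] fun _ => 0 := by
    filter_upwards [hconst.eventuallyEq_nhds] with y hy
    rw [hy.deriv_eq, deriv_const]
  rw [hderiv.deriv_eq, deriv_const] at hpos
  exact lt_irrefl _ hpos

theorem IsLocalMax.iteratedFDeriv_two_nonpos {E : Type*} [NormedAddCommGroup E] [NormedSpace ℝ E]
    {F : E → ℝ} {z : E} (h : IsLocalMax F z) (hF : ContDiffAt ℝ 2 F z) (w : E) :
    iteratedFDeriv ℝ 2 F z ![w, w] ≤ 0 := by
  set L : ℝ → E := fun t => z + t • w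
  have hL : ∀ t, HasDerivAt L w t := fun t => by
    simpa only [one_smul] using ((hasDerivAt_id' t).smul_const w).const_add z
  have hL0 : L 0 = z := by simp [L]
  have hLz : Tendsto L (𝓝 0) (𝓝 z) := hL0 ▸ (hL 0).continuousAt.tendsto
  have hmax : IsLocalMax (F ∘ L) 0 := by
    simpa only [IsLocalMax, IsMaxFilter, Function.comp_apply, hL0] using hLz.eventually h
  have hderiv : deriv (F ∘ L) =ᶠ[𝓝 0] fun t => fderiv ℝ F (L t) w := by
    filter_upwards [hLz.eventually (hF.eventually (by simp))] with t ht
    exact ((ht.differentiableAt (by norm_num)).hasFDerivAt.comp_hasDerivAt t (hL t)).deriv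
  have hderiv2 : HasDerivAt (fun t => fderiv ℝ F (L t) w) (iteratedFDeriv ℝ 2 F z ![w, w]) 0 := by
    have hd : DifferentiableAt ℝ (fderiv ℝ F) z :=
      (hF.fderiv_right (m := 1) (by norm_num)).differentiableAt one_ne_zero
    rw [← hL0] at hd
    rw [iteratedFDeriv_two_apply]
    simpa [hL0] using (hd.hasFDerivAt.comp_hasDerivAt 0 (hL 0)).clm_apply (hasDerivAt_const 0 w)
  rw [← hderiv2.deriv, ← hderiv.deriv_eq]
  exact hmax.deriv_deriv_nonpos (hF.continuousAt.comp_of_eq (hL 0).continuousAt hL0)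

theorem IsLocalMax.laplacian_nonpos {E : Type*} [NormedAddCommGroup E] [InnerProductSpace ℝ E]
    [FiniteDimensional ℝ E] {F : E → ℝ} {z : E} (h : IsLocalMax F z) (hF : ContDiffAt ℝ 2 F z) :
    Δ F z ≤ 0 := by
  rw [InnerProductSpace.laplacian_eq_iteratedFDeriv_stdOrthonormalBasis]
  exact Finset.sum_nonpos fun i _ => h.iteratedFDeriv_two_nonpos hF _

theorem IsLocalMax.laplacian_nonpos_of_sub_harmonicAt {E : Type*} [NormedAddCommGroup E]
    [InnerProductSpace ℝ E] [FiniteDimensional ℝ E] {F ψ : E → ℝ} {z : E}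
    (h : IsLocalMax (F - ψ) z) (hF : ContDiffAt ℝ 2 F z) (hψ : HarmonicAt ψ z) : Δ F z ≤ 0 := by
  have := h.laplacian_nonpos (hF.sub hψ.1)
  rwa [hF.laplacian_sub hψ.1, hψ.2.self_of_nhds, Pi.zero_apply, sub_zero] at this

theorem IsCompact.nonpos_of_isLocalMax_nonpos {X : Type*} [TopologicalSpace X] {K : Set X}
    {s : X → ℝ} (hK : IsCompact K) (hs : ContinuousOn s K)
    (hbdry : ∀ x ∈ K \ interior K, s x ≤ 0) (hint : ∀ x ∈ interior K, IsLocalMax s x → s x ≤ 0) :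
    ∀ x ∈ K, s x ≤ 0 := by
  intro x hx
  obtain ⟨y, hyK, hy⟩ := hK.exists_isMaxOn ⟨x, hx⟩ hs
  refine (hy hx).trans ?_
  by_cases hyi : y ∈ interior K
  · exact hint y hyi (hy.isLocalMax (mem_interior_iff_mem_nhds.1 hyi))
  · exact hbdry y ⟨hyK, hyi⟩

theorem lap_eq_laplacian (f : ℂ → ℝ) : lap f = Δ f := by
  rw [InnerProductSpace.laplacian_eq_iteratedFDeriv_complexPlane]
  rfl

namespace SmoothOffZero

variable {f g : ℂ → ℝ}

theorem contDiffAt (hf : SmoothOffZero f) {z : ℂ} (hz : z ≠ 0) : ContDiffAt ℝ 2 f z :=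
  (ContDiffOn.contDiffAt hf (isOpen_compl_singleton.mem_nhds hz)).of_le
    (WithTop.coe_le_coe.2 le_top)

theorem add (hf : SmoothOffZero f) (hg : SmoothOffZero g) : SmoothOffZero (fun z => f z + g z) :=
  ContDiffOn.add hf hg

theorem sub (hf : SmoothOffZero f) (hg : SmoothOffZero g) : SmoothOffZero (fun z => f z - g z) :=
  ContDiffOn.sub hf hg

theorem lap_add (hf : SmoothOffZero f) (hg : SmoothOffZero g) {z : ℂ} (hz : z ≠ 0) :
    lap (fun z => f z + g z) z = lap f z + lap g z := by
  simp only [lap_eq_laplacian]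
  exact (hf.contDiffAt hz).laplacian_add (hg.contDiffAt hz)

theorem lap_sub (hf : SmoothOffZero f) (hg : SmoothOffZero g) {z : ℂ} (hz : z ≠ 0) :
    lap (fun z => f z - g z) z = lap f z - lap g z := by
  simp only [lap_eq_laplacian]
  exact (hf.contDiffAt hz).laplacian_sub (hg.contDiffAt hz)

end SmoothOffZero

namespace TendstoZeroAtInfty

variable {f g : ℂ → ℝ}

theorem add (hf : TendstoZeroAtInfty f) (hg : TendstoZeroAtInfty g) :
    TendstoZeroAtInfty (fun z => f z + g z) := by
  simpa only [TendstoZeroAtInfty, add_zero] using Tendsto.add hf hg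

theorem sub (hf : TendstoZeroAtInfty f) (hg : TendstoZeroAtInfty g) :
    TendstoZeroAtInfty (fun z => f z - g z) := by
  simpa only [TendstoZeroAtInfty, sub_zero] using Tendsto.sub hf hg

theorem exists_lt (hf : TendstoZeroAtInfty f) {δ : ℝ} (hδ : 0 < δ) :
    ∃ R₀ : ℝ, ∀ z : ℂ, R₀ ≤ ‖z‖ → f z < δ := by
  obtain ⟨R₀, -, hR₀⟩ := (atTop_basis.comap _).eventually_iff.1 (hf.eventually (gt_mem_nhds hδ))
  exact ⟨R₀, fun z hz => hR₀ hz⟩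

end TendstoZeroAtInfty

namespace LogAsymAtZero

variable {f g : ℂ → ℝ} {γ δ : ℝ}

theorem add (hf : LogAsymAtZero γ f) (hg : LogAsymAtZero δ g) :
    LogAsymAtZero (γ + δ) (fun z => f z + g z) := by
  simpa only [LogAsymAtZero, add_div] using Tendsto.add hf hg

theorem sub (hf : LogAsymAtZero γ f) (hg : LogAsymAtZero δ g) :
    LogAsymAtZero (γ - δ) (fun z => f z - g z) := by
  simpa only [LogAsymAtZero, sub_div] using Tendsto.sub hf hg

theorem exists_le_neg_mul_log (hf : LogAsymAtZero γ f) (hγ : 0 ≤ γ) {ε : ℝ} (hε : 0 < ε) :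
    ∃ r₀ > 0, ∀ z : ℂ, z ≠ 0 → ‖z‖ < r₀ → f z ≤ -ε * Real.log ‖z‖ := by
  obtain ⟨r₁, hr₁, hr₁f⟩ := Metric.eventually_nhds_iff.1 <| eventually_nhdsWithin_iff.1 <|
    hf.eventually (lt_mem_nhds (show -ε < γ by linarith))
  refine ⟨min r₁ 1, lt_min hr₁ one_pos, fun z hz hzr => ?_⟩
  have hlog : Real.log ‖z‖ < 0 :=
    Real.log_neg (norm_pos_iff.2 hz) (hzr.trans_le (min_le_right _ _))
  have hquot := hr₁f (by simpa using hzr.trans_le (min_le_left _ _)) hz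
  exact ((lt_div_iff_of_neg hlog).1 hquot).le

end LogAsymAtZero

section Annulus

variable {E : Type*} [NormedAddCommGroup E]

theorem isCompact_norm_preimage_Icc [ProperSpace E] (r R : ℝ) :
    IsCompact ((‖·‖) ⁻¹' Set.Icc r R : Set E) :=
  (isCompact_closedBall (0 : E) R).of_isClosed_subset (isClosed_Icc.preimage continuous_norm)
    fun z hz => by simpa using hz.2

theorem norm_eq_or_norm_eq_of_mem_diff_interior {r R : ℝ} {z : E}
    (hz : z ∈ (‖·‖) ⁻¹' Set.Icc r R \ interior ((‖·‖) ⁻¹' Set.Icc r R)) : ‖z‖ = r ∨ ‖z‖ = R := by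
  obtain ⟨⟨hzr, hzR⟩, hzi⟩ := hz
  have hopen : (‖·‖) ⁻¹' Set.Ioo r R ⊆ interior ((‖·‖) ⁻¹' Set.Icc r R : Set E) :=
    interior_maximal (Set.preimage_mono Set.Ioo_subset_Icc_self)
      (isOpen_Ioo.preimage continuous_norm)
  by_contra! hne
  exact hzi (hopen ⟨lt_of_le_of_ne hzr hne.1.symm, lt_of_le_of_ne hzR hne.2⟩)

end Annulus

theorem SmoothOffZero.le_log_barrier {f : ℂ → ℝ} (hf : SmoothOffZero f)
    (hpos : ∀ z : ℂ, z ≠ 0 → 0 < f z → 0 < lap f z) {r R ε δ : ℝ} (hr : 0 < r) (hε : 0 ≤ ε)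
    (hδ : 0 ≤ δ) (hout : ∀ z : ℂ, ‖z‖ = R → f z ≤ δ)
    (hin : ∀ z : ℂ, ‖z‖ = r → f z ≤ ε * (Real.log R - Real.log ‖z‖) + δ) :
    ∀ z : ℂ, r ≤ ‖z‖ → ‖z‖ ≤ R → f z ≤ ε * (Real.log R - Real.log ‖z‖) + δ := by
  set ψ : ℂ → ℝ := fun z => ε * (Real.log R - Real.log ‖z‖) + δ
  set K : Set ℂ := (‖·‖) ⁻¹' Set.Icc r R
  have hK0 : ∀ z ∈ K, z ≠ 0 := fun z hz => norm_pos_iff.1 (hr.trans_le hz.1)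
  have hψ : ∀ z : ℂ, z ≠ 0 → HarmonicAt ψ z := fun z hz => by
    have := ((harmonicAt_const (Real.log R)).sub
      (analyticAt_id.harmonicAt_log_norm hz)).const_smul (c := ε)
    convert this.add (harmonicAt_const δ) using 1
    funext w
    simp [ψ]
  have hcont : ContinuousOn (f - ψ) K := fun z hz =>
    ((hf.contDiffAt (hK0 z hz)).continuousAt.sub
      (hψ z (hK0 z hz)).1.continuousAt).continuousWithinAt
  have hbdry : ∀ z ∈ K \ interior K, (f - ψ) z ≤ 0 := fun z hz => by
    rcases norm_eq_or_norm_eq_of_mem_diff_interior hz with hzr | hzR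
    · simpa [ψ] using hin z hzr
    · simpa [ψ, hzR] using hout z hzR
  have hint : ∀ z ∈ interior K, IsLocalMax (f - ψ) z → (f - ψ) z ≤ 0 := by
    intro z hzi hmax
    obtain ⟨-, hzR⟩ := interior_subset hzi
    have hz := hK0 z (interior_subset hzi)
    have hlap : Δ f z ≤ 0 := hmax.laplacian_nonpos_of_sub_harmonicAt (hf.contDiffAt hz) (hψ z hz)
    have hfz : f z ≤ 0 := not_lt.1 fun hfz => (hpos z hz hfz).not_ge (by rwa [lap_eq_laplacian])
    have hψz : 0 ≤ ψ z := by
      have := Real.log_le_log (norm_pos_iff.2 hz) hzR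
      positivity
    simp only [Pi.sub_apply]
    linarith
  intro z hzr hzR
  have := (isCompact_norm_preimage_Icc r R).nonpos_of_isLocalMax_nonpos hcont hbdry hint z
    ⟨hzr, hzR⟩
  simp only [Pi.sub_apply, ψ] at this
  linarith

theorem SmoothOffZero.nonpos_of_lap_pos {f : ℂ → ℝ} {γ : ℝ} (hf : SmoothOffZero f) (hγ : 0 ≤ γ)
    (hinf : TendstoZeroAtInfty f) (hlog : LogAsymAtZero γ f)
    (hpos : ∀ z : ℂ, z ≠ 0 → 0 < f z → 0 < lap f z) : ∀ z : ℂ, z ≠ 0 → f z ≤ 0 := by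
  intro z₀ hz₀
  have hz₀pos : 0 < ‖z₀‖ := norm_pos_iff.2 hz₀
  refine le_of_forall_pos_le_add fun η hη => ?_
  obtain ⟨R₀, hR₀⟩ := hinf.exists_lt (half_pos hη)
  set R := max R₀ (max (‖z₀‖ + 1) 1)
  have hz₀R : ‖z₀‖ < R := lt_max_of_lt_right (lt_max_of_lt_left (lt_add_one _))
  have hR1 : 1 ≤ R := le_max_of_le_right (le_max_right _ _)
  set L := Real.log R - Real.log ‖z₀‖
  have hL : 0 < L := sub_pos.2 (Real.log_lt_log hz₀pos hz₀R)
  -- so that the barrier `ε (log R - log ‖z₀‖) + η / 2` equals `η` at `z₀`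
  set ε := η / 2 / L
  have hε : 0 < ε := by positivity
  obtain ⟨r₀, hr₀, hr₀f⟩ := hlog.exists_le_neg_mul_log hγ hε
  set r := min (r₀ / 2) ‖z₀‖
  have hr : 0 < r := lt_min (half_pos hr₀) hz₀pos
  have hin : ∀ z : ℂ, ‖z‖ = r → f z ≤ ε * (Real.log R - Real.log ‖z‖) + η / 2 := by
    intro z hz
    have hfz := hr₀f z (norm_pos_iff.1 (hz ▸ hr))
      (hz ▸ (min_le_left _ _).trans_lt (half_lt_self hr₀))
    have := mul_nonneg hε.le (Real.log_nonneg hR1)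
    linarith
  have hz₀f := hf.le_log_barrier hpos hr hε.le (half_pos hη).le
    (fun z hz => (hR₀ z (hz ▸ le_max_left _ _)).le) hin z₀ (min_le_right _ _) hz₀R.le
  rw [div_mul_cancel₀ _ hL.ne'] at hz₀f
  linarith

theorem Real.exp_mul_sub_exp_neg_mul_le {a x y : ℝ} (ha : 0 ≤ a) (hxy : x + y ≤ 0) (hy : y ≤ 0) :
    exp (a * x) - exp (-(a * y)) ≤ exp (a * (x + y)) - 1 := by
  have h₁ : exp (a * (x + y)) ≤ 1 := exp_le_one_iff.2 (mul_nonpos_of_nonneg_of_nonpos ha hxy)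
  have h₂ : 1 ≤ exp (-(a * y)) := one_le_exp (by nlinarith)
  have h₃ : exp (a * x) = exp (-(a * y)) * exp (a * (x + y)) := by
    rw [← exp_add]
    congr 1
    ring
  nlinarith [mul_nonneg (sub_nonneg.2 h₂) (sub_nonneg.2 h₁)]

theorem toda_sum_bounds_general (a γ₀ γ₁ : ℝ) (ha : 0 < a)
    (h0 : 0 ≤ γ₀) (h1 : 0 ≤ γ₁)
    (h : ℂ → ℝ) (hh : IsLiouvilleSol a (γ₀ + γ₁) h)
    (u v : ℂ → ℝ) (hsol : IsTodaSol a a u v) (hasym : HasAsymData γ₀ γ₁ u v) :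
    ∀ z : ℂ, z ≠ 0 → h z ≤ u z + v z ∧ u z + v z ≤ 0 := by
  obtain ⟨hhs, hhlap, hhinf, hhlog⟩ := hh
  obtain ⟨hus, hvs, hlap⟩ := hsol
  obtain ⟨huinf, hvinf, hulog, hvlog⟩ := hasym
  have hwlap : ∀ z : ℂ, z ≠ 0 →
      lap (fun z => u z + v z) z = 4 * (Real.exp (a * u z) - Real.exp (-(a * v z))) := by
    intro z hz
    rw [hus.lap_add hvs hz, (hlap z hz).1, (hlap z hz).2]
    ring
  have hw : ∀ z : ℂ, z ≠ 0 → u z + v z ≤ 0 :=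
    (hus.add hvs).nonpos_of_lap_pos (add_nonneg h0 h1) (huinf.add hvinf) (hulog.add hvlog)
      fun z hz hpos => by
        rw [hwlap z hz]
        linarith [Real.exp_lt_exp.2 (show -(a * v z) < a * u z by nlinarith)]
  have hu : ∀ z : ℂ, z ≠ 0 → u z ≤ 0 :=
    hus.nonpos_of_lap_pos h0 huinf hulog fun z hz hpos => by
      rw [(hlap z hz).1]
      linarith [Real.exp_lt_exp.2 (show v z - u z < a * u z by nlinarith [hw z hz])]
  have hv : ∀ z : ℂ, z ≠ 0 → v z ≤ 0 :=
    hvs.nonpos_of_lap_pos h1 hvinf hvlog fun z hz hpos => by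
      rw [(hlap z hz).2]
      linarith [Real.exp_lt_exp.2 (show -(a * v z) < v z - u z by nlinarith [hu z hz])]
  have hhw : ∀ z : ℂ, z ≠ 0 → h z - (u z + v z) ≤ 0 :=
    (hhs.sub (hus.add hvs)).nonpos_of_lap_pos le_rfl (hhinf.sub (huinf.add hvinf))
      (by simpa only [sub_self] using hhlog.sub (hulog.add hvlog)) fun z hz hpos => by
        rw [hhs.lap_sub (hus.add hvs) hz, hwlap z hz, hhlap z hz]
        have := Real.exp_mul_sub_exp_neg_mul_le ha.le (hw z hz) (hv z hz)
        linarith [Real.exp_lt_exp.2 (show a * (u z + v z) < a * h z by nlinarith)]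
  exact fun z hz => ⟨by linarith [hhw z hz], hw z hz⟩

/-- Comparison bound: `h ≤ u + v ≤ 0` for any solution `(u, v)` with
asymptotic data `(γ₀, γ₁)`, where `h` solves `Δh = 4(e^{ah} − 1)` with data `γ₀ + γ₁`. -/
theorem toda_sum_bounds (a γ₀ γ₁ : ℝ) (ha : 0 < a)
    (h0 : 0 ≤ γ₀) (h1 : 0 ≤ γ₁) (h2 : γ₁ ≤ 2 / a) (h3 : γ₀ - γ₁ ≤ 2)
    (h : ℂ → ℝ) (hh : IsLiouvilleSol a (γ₀ + γ₁) h)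
    (u v : ℂ → ℝ) (hsol : IsTodaSol a a u v) (hasym : HasAsymData γ₀ γ₁ u v) :
    ∀ z : ℂ, z ≠ 0 → h z ≤ u z + v z ∧ u z + v z ≤ 0 :=
  toda_sum_bounds_general a γ₀ γ₁ ha h0 h1 h hh u v hsol hasym
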